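/- arXiv:1712.08113 — 6 statements merged into one kernel-verified Lean document; each statement's English description precedes it below -/
import Mathlib

section
/- Let H be a directed hypergraph representing an index coding problem with n messages over F_q, let α(H) be its generalized independence number and κ_q(H) its min-rank. Then α(H) ≤ κ_q(H). -/
/-- `S` is a generalized independent set for the index coding problem with side
information `X` and demand map `f`: every nonempty subset `T` of `S` belongs to `J(H)`,
i.e. `T = {f i} ∪ Y` with `Y ⊆ [n] \ ({f i} ∪ X i)` for some receiver `i`. -/
def GenIndep {n K : ℕ} (X : Fin K → Finset (Fin n)) (f : Fin K → Fin n)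
    (S : Finset (Fin n)) : Prop :=
  ∀ T ⊆ S, T.Nonempty → ∃ i, f i ∈ T ∧ ∀ j ∈ T, j ≠ f i → j ∉ X i

/-- Key lemma: any generalized independent set has size at most the rank of any
fitting matrix `{V i + e_{f i}}`. -/
theorem genIndep_card_le_finrank {F : Type*} [Field F] {n K : ℕ}
    (X : Fin K → Finset (Fin n)) (f : Fin K → Fin n) (hf : ∀ i, f i ∉ X i)
    (S : Finset (Fin n)) (hS : GenIndep X f S)
    (V : Fin K → Fin n → F) (hV : ∀ i j, V i j ≠ 0 → j ∈ X i) :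
    S.card ≤ Module.finrank F (Submodule.span F
      (Set.range fun i => V i + Pi.single (f i) (1 : F))) := by
  classical
  set w : Fin K → Fin n → F := fun i => V i + Pi.single (f i) (1 : F) with hw
  set W := Submodule.span F (Set.range w) with hW
  -- dual functionals: coordinate evaluations on W for coordinates in S
  let φ : {x // x ∈ S} → Module.Dual F W :=
    fun j => (LinearMap.proj (j : Fin n)).comp W.subtype
  have hli : LinearIndependent F φ := by
    rw [Fintype.linearIndependent_iff]
    intro g hg
    by_contra hcon
    push_neg at hcon
    obtain ⟨j0, hj0⟩ := hcon
    set T : Finset (Fin n) := S.filter (fun j => ∃ h : j ∈ S, g ⟨j, h⟩ ≠ 0) with hT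
    have hTS : T ⊆ S := Finset.filter_subset _ _
    have hTne : T.Nonempty := ⟨j0, Finset.mem_filter.2 ⟨j0.2, j0.2, by simpa using hj0⟩⟩
    obtain ⟨i, hfi, hside⟩ := hS T hTS hTne
    have hfiS : (f i : Fin n) ∈ S := hTS hfi
    have hwW : w i ∈ W := Submodule.subset_span ⟨i, rfl⟩
    have h0 := congrArg (fun (ψ : Module.Dual F W) => ψ ⟨w i, hwW⟩) hg
    simp only [LinearMap.zero_apply] at h0
    rw [LinearMap.sum_apply] at h0
    have hterm : ∀ j : {x // x ∈ S}, j ≠ ⟨f i, hfiS⟩ → (g j • φ j) ⟨w i, hwW⟩ = 0 := by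
      intro j hj
      by_cases hgj : g j = 0
      · simp [hgj]
      · have hjT : (j : Fin n) ∈ T := Finset.mem_filter.2 ⟨j.2, j.2, hgj⟩
        have hjne : (j : Fin n) ≠ f i := by
          intro h; exact hj (Subtype.ext h)
        have hVij : V i j = 0 := by
          by_contra h; exact hside j hjT hjne (hV i j h)
        have : w i (j : Fin n) = 0 := by
          simp [hw, hVij, Pi.single_eq_of_ne hjne]
        simp [φ, this]
    rw [Finset.sum_eq_single (⟨f i, hfiS⟩ : {x // x ∈ S})
      (fun j _ hj => hterm j hj) (fun h => absurd (Finset.mem_univ _) h)] at h0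
    have hwfi : w i (f i) = 1 := by
      have hVfi : V i (f i) = 0 := by
        by_contra h; exact hf i (hV i (f i) h)
      simp [hw, hVfi]
    have hgfi : g ⟨f i, hfiS⟩ ≠ 0 := by
      obtain ⟨h1, h2⟩ := (Finset.mem_filter.1 hfi).2
      exact h2
    apply hgfi
    simpa [φ, hwfi] using h0
  have := hli.fintype_card_le_finrank
  rwa [Fintype.card_coe, Subspace.dual_finrank_eq] at this

/-- The generalized independence number `α(H)` is at most the min-rank `κ_q(H)`. -/
theorem stmt3 {F : Type*} [Field F] {n K : ℕ}
    (X : Fin K → Finset (Fin n)) (f : Fin K → Fin n) (hf : ∀ i, f i ∉ X i) :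
    sSup {c : ℕ | ∃ S : Finset (Fin n), GenIndep X f S ∧ c = S.card} ≤
      sInf {c : ℕ | ∃ V : Fin K → Fin n → F,
        (∀ i j, V i j ≠ 0 → j ∈ X i) ∧
        c = Module.finrank F (Submodule.span F
          (Set.range fun i => V i + Pi.single (f i) (1 : F)))} := by
  apply csSup_le'
  rintro c ⟨S, hS, rfl⟩
  apply le_csInf
  · exact ⟨_, fun _ _ => 0, fun i j h => absurd rfl h, rfl⟩
  · rintro b ⟨V, hV, rfl⟩
    exact genIndep_card_le_finrank X f hf S hS V hV
end

section
/- In the index coding problem induced by a coded caching system with K users, N files, symmetric batch prefetching with parameter r, and demand vector d with Ne(d) distinct requested files, the set B = ∪_{i∈[Ne(d)]} { X_{d_i, A} : A ⊆ [K], |A| = r, A ∩ {d_1,...,d_i} = ∅ } (where users are relabeled so the first Ne(d) users have distinct demands) has cardinality binomial(K, r+1) - binomial(K-Ne(d), r+1). -/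
open Finset

private lemma aux_sum (K r : ℕ) : ∀ m, m ≤ K →
    ∑ i : Fin m, (K - (i + 1)).choose r
      = K.choose (r + 1) - (K - m).choose (r + 1) := by
  intro m
  induction m with
  | zero => simp
  | succ n ih =>
    intro h
    rw [Fin.sum_univ_castSucc]
    simp only [Fin.coe_castSucc, Fin.val_last]
    rw [ih (le_of_lt (Nat.lt_of_succ_le h))]
    have h1 : K - n = (K - (n + 1)) + 1 := by omega
    have h2 : (K - n).choose (r + 1)
        = (K - (n + 1)).choose r + (K - (n + 1)).choose (r + 1) := by
      rw [h1, Nat.choose_succ_succ]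
    have h3 : (K - n).choose (r + 1) ≤ K.choose (r + 1) :=
      Nat.choose_le_choose _ (Nat.sub_le _ _)
    omega

/-- The set `B = ∪_{i∈[m]} { (i, A) : A ⊆ [K], |A| = r, A ∩ {d_1,…,d_i} = ∅ }`
(with `d_1,…,d_m` distinct) has cardinality `C(K, r+1) - C(K-m, r+1)`. -/
theorem stmt4 (K r m : ℕ) (hm : m ≤ K) (hr : r ≤ K)
    (d : Fin m → Fin K) (hd : Function.Injective d) :
    (Finset.univ.filter (fun p : Fin m × Finset (Fin K) =>
        p.2.card = r ∧ ∀ j, j ≤ p.1 → d j ∉ p.2)).card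
      = K.choose (r + 1) - (K - m).choose (r + 1) := by
  have key : (Finset.univ.filter (fun p : Fin m × Finset (Fin K) =>
        p.2.card = r ∧ ∀ j, j ≤ p.1 → d j ∉ p.2)).card
      = ∑ i : Fin m, ((Finset.univ : Finset (Finset (Fin K))).filter
          (fun A => A.card = r ∧ ∀ j, j ≤ i → d j ∉ A)).card := by
    simp only [Finset.card_filter]
    rw [Fintype.sum_prod_type]
  rw [key]
  have inner : ∀ i : Fin m,
      ((Finset.univ : Finset (Finset (Fin K))).filter
          (fun A => A.card = r ∧ ∀ j, j ≤ i → d j ∉ A)).card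
        = (K - (i + 1)).choose r := by
    intro i
    have hset : (Finset.univ.filter
          (fun A : Finset (Fin K) => A.card = r ∧ ∀ j, j ≤ i → d j ∉ A))
        = ((Finset.univ : Finset (Fin K)) \ (Finset.Iic i).image d).powersetCard r := by
      ext A
      simp only [Finset.mem_filter, Finset.mem_univ, true_and,
        Finset.mem_powersetCard, Finset.subset_sdiff, Finset.subset_univ,
        Finset.disjoint_right, Finset.mem_image, Finset.mem_Iic]
      constructor
      · rintro ⟨hc, hA⟩
        exact ⟨fun x ⟨j, hj, hjx⟩ hx => hA j hj (hjx ▸ hx), hc⟩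
      · rintro ⟨hdisj, hc⟩
        exact ⟨hc, fun j hj hmem => hdisj ⟨j, hj, rfl⟩ hmem⟩
    rw [hset, Finset.card_powersetCard, Finset.card_sdiff_of_subset (Finset.subset_univ _),
      Finset.card_image_of_injective _ hd, Fin.card_Iic, Finset.card_univ,
      Fintype.card_fin]
  simp only [inner]
  exact aux_sum K r m hm
end

section
/- For an index coding problem with side information hypergraph H over F_q and δ errors to correct, the optimal length N_q[H, δ] of a linear δ-error-correcting index code satisfies N_q[α(H), 2δ+1] ≤ N_q[H, δ] ≤ N_q[κ_q(H), 2δ+1]; consequently, if α(H) = κ_q(H), then N_q[H, δ] = N_q[α(H), 2δ+1]. -/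
/-!
The lower bound: the rows of any `δ`-error-correcting index code indexed by a generalized
independent set `S` generate a classical `[len, |S|, 2δ+1]` code, since every nonzero
combination of them is supported on a set of `J(H)`.

The upper bound: pick a min-rank matrix with row space `W` (`dim W = κ_q(H)`) and an optimal
`[N, κ_q(H), 2δ+1]` code `C`, and identify `Dual W` with `C`. The message `x` is encoded as the
image in `C` of the functional `w ↦ ∑ᵢ xᵢ wᵢ` on `W`. A combination of encodings supported on
`T ∈ J(H)` pairs with the row of `W` serving the receiver of `T` to a nonzero scalar, so its
codeword is nonzero and has weight at least `2δ+1`.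
-/

open Module

/-- `N_q[k, dist]`: the shortest length of a linear code over `F` of dimension `k` and
minimum Hamming distance (at least) `dist`. -/
noncomputable def Nq (F : Type*) [Field F] [DecidableEq F] (k dist : ℕ) : ℕ :=
  sInf {n : ℕ | ∃ C : Submodule F (Fin n → F),
    Module.finrank F C = k ∧ ∀ c ∈ C, c ≠ 0 → dist ≤ hammingNorm c}

/-- The collection `J(H)` of an index coding problem: sets of the form `{f i} ∪ Y` with
`Y ⊆ [n] \ ({f i} ∪ X i)`. -/
def Jset {n K : ℕ} (X : Fin K → Finset (Fin n)) (f : Fin K → Fin n) :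
    Set (Finset (Fin n)) :=
  {T | T.Nonempty ∧ ∃ i, f i ∈ T ∧ ∀ j ∈ T, j ≠ f i → j ∉ X i}

/-- The generalized independence number `α(H)`. -/
noncomputable def alphaH {n K : ℕ} (X : Fin K → Finset (Fin n)) (f : Fin K → Fin n) : ℕ :=
  sSup {c : ℕ | ∃ S : Finset (Fin n),
    (∀ T ⊆ S, T.Nonempty → T ∈ Jset X f) ∧ c = S.card}

/-- The min-rank `κ_q(H)`. -/
noncomputable def kappaH (F : Type*) [Field F] {n K : ℕ}
    (X : Fin K → Finset (Fin n)) (f : Fin K → Fin n) : ℕ :=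
  sInf {c : ℕ | ∃ V : Fin K → Fin n → F,
    (∀ i j, V i j ≠ 0 → j ∈ X i) ∧
    c = Module.finrank F (Submodule.span F
      (Set.range fun i => V i + Pi.single (f i) (1 : F)))}

/-- `N_q[H, δ]`: the optimal length of a linear `δ`-error-correcting index code,
via the characterization that all relevant linear combinations of the rows have
Hamming weight at least `2δ+1`. -/
noncomputable def NH (F : Type*) [Field F] [DecidableEq F] {n K : ℕ}
    (X : Fin K → Finset (Fin n)) (f : Fin K → Fin n) (δ : ℕ) : ℕ :=
  sInf {len : ℕ | ∃ L : Matrix (Fin n) (Fin len) F,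
    ∀ T ∈ Jset X f, ∀ z : Fin n → F, (∀ i ∈ T, z i ≠ 0) →
      2 * δ + 1 ≤ hammingNorm (∑ i ∈ T, z i • L i)}

def IsIndexCode {F : Type*} [Field F] [DecidableEq F] {n K len : ℕ}
    (X : Fin K → Finset (Fin n)) (f : Fin K → Fin n) (d : ℕ) (L : Fin n → Fin len → F) :
    Prop :=
  ∀ T ∈ Jset X f, ∀ z : Fin n → F, (∀ i ∈ T, z i ≠ 0) → d ≤ hammingNorm (∑ i ∈ T, z i • L i)

section LinearCodes

variable {F : Type*} [Field F] [DecidableEq F]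

lemma exists_repetition_family (k d : ℕ) :
    ∃ v : Fin k → Fin (k * d) → F,
      ∀ g : Fin k → F, g ≠ 0 → d ≤ hammingNorm (∑ i, g i • v i) := by
  let e : Fin k × Fin d ≃ Fin (k * d) := finProdFinEquiv
  refine ⟨fun i j => if (e.symm j).1 = i then 1 else 0, fun g hg => ?_⟩
  obtain ⟨i, hi⟩ := Function.ne_iff.mp hg
  have hsum : ∑ i, g i • (fun j => if (e.symm j).1 = i then (1 : F) else 0) =
      fun j => g (e.symm j).1 := by
    funext j
    simp [Finset.sum_apply]
  rw [hsum]
  simpa [hammingNorm] using Finset.card_le_card_of_injOn (s := Finset.univ)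
    (t := {j | g (e.symm j).1 ≠ 0}) (fun t => e (i, t)) (fun t _ => by simpa using hi)
    (fun a _ b _ h => by simpa using h)

lemma exists_code_of_family {ι : Type*} [Fintype ι] {m d : ℕ} (hd : 0 < d)
    (v : ι → Fin m → F) (hv : ∀ g : ι → F, g ≠ 0 → d ≤ hammingNorm (∑ i, g i • v i)) :
    ∃ C : Submodule F (Fin m → F), finrank F C = Fintype.card ι ∧
      ∀ c ∈ C, c ≠ 0 → d ≤ hammingNorm c := by
  have hli : LinearIndependent F v := by
    rw [Fintype.linearIndependent_iff]
    intro g hg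
    by_contra hne
    have := hv g fun h => hne (congrFun h)
    rw [hg, hammingNorm_zero] at this
    omega
  refine ⟨Submodule.span F (Set.range v), finrank_span_eq_card hli, fun c hc hc0 => ?_⟩
  obtain ⟨g, rfl⟩ := (Submodule.mem_span_range_iff_exists_fun F).mp hc
  exact hv g (by rintro rfl; simp at hc0)

lemma Nq_le_of_family {ι : Type*} [Fintype ι] {m d : ℕ} (hd : 0 < d)
    (v : ι → Fin m → F) (hv : ∀ g : ι → F, g ≠ 0 → d ≤ hammingNorm (∑ i, g i • v i)) :
    Nq F (Fintype.card ι) d ≤ m :=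
  Nat.sInf_le (exists_code_of_family hd v hv)

lemma exists_code_length_Nq (k : ℕ) {d : ℕ} (hd : 0 < d) :
    ∃ C : Submodule F (Fin (Nq F k d) → F), finrank F C = k ∧
      ∀ c ∈ C, c ≠ 0 → d ≤ hammingNorm c := by
  obtain ⟨v, hv⟩ := exists_repetition_family (F := F) k d
  have hrep := exists_code_of_family hd v hv
  rw [Fintype.card_fin] at hrep
  exact Nat.sInf_mem (s := {m | ∃ C : Submodule F (Fin m → F), finrank F C = k ∧
    ∀ c ∈ C, c ≠ 0 → d ≤ hammingNorm c}) ⟨k * d, hrep⟩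

lemma exists_rows_of_finrank_eq {ι : Type*} [Fintype ι] {N d : ℕ} (W : Submodule F (ι → F))
    (C : Submodule F (Fin N → F)) (hWC : finrank F W = finrank F C)
    (hC : ∀ c ∈ C, c ≠ 0 → d ≤ hammingNorm c) :
    ∃ L : ι → Fin N → F, ∀ (s : Finset ι) (z : ι → F),
      (∃ w ∈ W, ∑ i ∈ s, z i * w i ≠ 0) → d ≤ hammingNorm (∑ i ∈ s, z i • L i) := by
  let e : Dual F W ≃ₗ[F] C :=
    LinearEquiv.ofFinrankEq _ _ (by rw [Subspace.dual_finrank_eq, hWC])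
  let coord : ι → Dual F W := fun i => (LinearMap.proj i).domRestrict W
  refine ⟨fun i => e (coord i), fun s z ⟨w, hw, hzw⟩ => ?_⟩
  have hφ : ∑ i ∈ s, z i • coord i ≠ 0 := fun h =>
    hzw (by simpa [coord] using LinearMap.congr_fun h ⟨w, hw⟩)
  have hsum : ∑ i ∈ s, z i • ((e (coord i) : C) : Fin N → F) =
      e (∑ i ∈ s, z i • coord i) := by
    simp
  rw [hsum]
  exact hC _ (e _).2 (by rwa [Ne, ZeroMemClass.coe_eq_zero, LinearEquiv.map_eq_zero_iff])

end LinearCodes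

section IndexCoding

variable {F : Type*} [Field F] {n K : ℕ}
  (X : Fin K → Finset (Fin n)) (f : Fin K → Fin n)

lemma exists_card_eq_alphaH :
    ∃ S : Finset (Fin n), (∀ T ⊆ S, T.Nonempty → T ∈ Jset X f) ∧ S.card = alphaH X f := by
  obtain ⟨S, hS, hcard⟩ := Nat.sSup_mem (s := {c | ∃ S : Finset (Fin n),
      (∀ T ⊆ S, T.Nonempty → T ∈ Jset X f) ∧ c = S.card})
    ⟨0, ∅, fun T hT hTne => absurd (Finset.subset_empty.mp hT) hTne.ne_empty, rfl⟩
    ⟨n, by rintro c ⟨S, -, rfl⟩; simpa using S.card_le_univ⟩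
  exact ⟨S, hS, hcard.symm⟩

variable (F) in
lemma exists_finrank_eq_kappaH :
    ∃ V : Fin K → Fin n → F, (∀ i j, V i j ≠ 0 → j ∈ X i) ∧
      finrank F (Submodule.span F (Set.range fun i => V i + Pi.single (f i) 1)) =
        kappaH F X f := by
  have hne : {c : ℕ | ∃ V : Fin K → Fin n → F, (∀ i j, V i j ≠ 0 → j ∈ X i) ∧
      c = finrank F (Submodule.span F
        (Set.range fun i => V i + Pi.single (f i) (1 : F)))}.Nonempty :=
    ⟨_, fun _ => 0, fun _ _ h => absurd rfl h, rfl⟩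
  obtain ⟨V, hV, h⟩ := Nat.sInf_mem hne
  exact ⟨V, hV, h.symm⟩

lemma exists_isIndexCode [DecidableEq F] {d : ℕ} (hd : 0 < d) :
    ∃ len, ∃ L : Fin n → Fin len → F, IsIndexCode X f d L := by
  obtain ⟨C, hCrank, hC⟩ := exists_code_length_Nq (F := F) n hd
  let b := finBasisOfFinrankEq F C hCrank
  have hli := b.linearIndependent.map' C.subtype C.ker_subtype
  refine ⟨_, fun i => (b i).1, ?_⟩
  rintro T ⟨⟨i, hi⟩, -⟩ z hz
  refine hC _ (C.sum_mem fun j _ => C.smul_mem _ (b j).2) fun h0 => ?_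
  exact hz i hi (linearIndependent_iff'.mp hli T z h0 i hi)

lemma le_hammingNorm_sum_of_forall_subset_mem_Jset [DecidableEq F] {d len : ℕ}
    {S : Finset (Fin n)} (hS : ∀ T ⊆ S, T.Nonempty → T ∈ Jset X f) {L : Fin n → Fin len → F}
    (hL : IsIndexCode X f d L) (g : S → F) (hg : g ≠ 0) :
    d ≤ hammingNorm (∑ i : S, g i • L i) := by
  set z := Function.extend Subtype.val g 0
  have hz : ∀ i : S, z i = g i := Subtype.val_injective.extend_apply g 0
  obtain ⟨i, hi⟩ := Function.ne_iff.mp hg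
  have hsum : ∑ i ∈ S, z i • L i = ∑ i : S, g i • L i := by
    rw [← Finset.sum_coe_sort]
    exact Finset.sum_congr rfl fun i _ => by rw [hz]
  rw [← hsum, ← Finset.sum_filter_of_ne (p := (z · ≠ 0)) (fun j _ h => left_ne_zero_of_smul h)]
  refine hL _ (hS _ (Finset.filter_subset _ _) ⟨i, Finset.mem_filter.mpr ⟨i.2, ?_⟩⟩) z
    (fun j hj => (Finset.mem_filter.mp hj).2)
  rwa [hz]

lemma sum_mul_row_eq_of_mem_Jset (hf : ∀ i, f i ∉ X i) {V : Fin K → Fin n → F}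
    (hV : ∀ i j, V i j ≠ 0 → j ∈ X i) {T : Finset (Fin n)} {i : Fin K} (hfi : f i ∈ T)
    (hXT : ∀ j ∈ T, j ≠ f i → j ∉ X i) (z : Fin n → F) :
    ∑ j ∈ T, z j * (V i + Pi.single (f i) 1 : Fin n → F) j = z (f i) := by
  rw [Finset.sum_eq_single_of_mem (f i) hfi fun j hj hne => ?_]
  · have : V i (f i) = 0 := by_contra fun h => hf i (hV _ _ h)
    simp [this]
  · have : V i j = 0 := by_contra fun h => hXT j hj hne (hV _ _ h)
    simp [this, hne]

lemma Nq_alphaH_le_NH [DecidableEq F] (δ : ℕ) : Nq F (alphaH X f) (2 * δ + 1) ≤ NH F X f δ := by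
  obtain ⟨S, hS, hcard⟩ := exists_card_eq_alphaH X f
  refine le_csInf (exists_isIndexCode X f (Nat.succ_pos _)) ?_
  rintro len ⟨L, hL⟩
  rw [← hcard, ← Fintype.card_coe S]
  exact Nq_le_of_family (Nat.succ_pos _) (fun i : S => L i)
    (le_hammingNorm_sum_of_forall_subset_mem_Jset X f hS hL)

lemma NH_le_Nq_kappaH [DecidableEq F] (hf : ∀ i, f i ∉ X i) (δ : ℕ) :
    NH F X f δ ≤ Nq F (kappaH F X f) (2 * δ + 1) := by
  obtain ⟨V, hV, hrank⟩ := exists_finrank_eq_kappaH F X f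
  obtain ⟨C, hCrank, hC⟩ := exists_code_length_Nq (F := F) (kappaH F X f) (Nat.succ_pos _)
  obtain ⟨L, hL⟩ := exists_rows_of_finrank_eq _ C (hrank.trans hCrank.symm) hC
  refine Nat.sInf_le ⟨L, ?_⟩
  rintro T ⟨-, i, hfi, hXT⟩ z hz
  refine hL T z ⟨_, Submodule.subset_span ⟨i, rfl⟩, ?_⟩
  rw [sum_mul_row_eq_of_mem_Jset X f hf hV hfi hXT]
  exact hz _ hfi

end IndexCoding

/-- The α-bound and κ-bound on the optimal length of a `δ`-error-correcting index code,
and their coincidence when `α(H) = κ_q(H)`. -/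
theorem stmt7 {F : Type*} [Field F] [DecidableEq F] {n K : ℕ}
    (X : Fin K → Finset (Fin n)) (f : Fin K → Fin n) (hf : ∀ i, f i ∉ X i)
    (δ : ℕ) :
    Nq F (alphaH X f) (2 * δ + 1) ≤ NH F X f δ ∧
    NH F X f δ ≤ Nq F (kappaH F X f) (2 * δ + 1) ∧
    (alphaH X f = kappaH F X f → NH F X f δ = Nq F (alphaH X f) (2 * δ + 1)) := by
  refine ⟨Nq_alphaH_le_NH X f δ, NH_le_Nq_kappaH X f hf δ, fun h => ?_⟩
  exact le_antisymm (h ▸ NH_le_Nq_kappaH X f hf δ) (Nq_alphaH_le_NH X f δ)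
end

section
/- For an index coding problem H over F_q, concatenating a scalar linear index code of length κ_q(H) (given by matrix L ∈ F_q^{n×κ}) with a linear [n', κ_q(H), 2δ+1]_q error-correcting code with generator matrix G yields a δ-error-correcting index code of length n': i.e., if XL determines the demands of all receivers given their side information, then from any vector (XL)G + e with wt(e) ≤ δ, together with side information, each receiver can recover its demanded message. -/
/-!
The inner code `y ↦ y ᵥ* G` has minimum distance `2δ + 1`, so Hamming balls of radius `δ`
around distinct codewords are disjoint and a received word `(x ᵥ* L) ᵥ* G + e` determines
`x ᵥ* L` uniquely. Each receiver first recovers `x ᵥ* L` this way and then runs the decoder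
of the error-free index code `L`.
-/

open Matrix

section UniqueDecoding

variable {M ι : Type*} {β : ι → Type*} [Fintype ι] [∀ i, DecidableEq (β i)]

theorem eq_of_hammingDist_le_of_hammingDist_le {enc : M → ∀ i, β i} {δ : ℕ}
    (henc : ∀ m m', m ≠ m' → 2 * δ + 1 ≤ hammingDist (enc m) (enc m'))
    {m m' : M} {w : ∀ i, β i} (hm : hammingDist (enc m) w ≤ δ)
    (hm' : hammingDist (enc m') w ≤ δ) : m = m' := by
  by_contra hne
  have := henc m m' hne
  have := hammingDist_triangle_right (enc m) (enc m') w
  omega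

theorem exists_decoder_of_two_mul_add_one_le_hammingDist [Nonempty M]
    {enc : M → ∀ i, β i} {δ : ℕ}
    (henc : ∀ m m', m ≠ m' → 2 * δ + 1 ≤ hammingDist (enc m) (enc m')) :
    ∃ dec : (∀ i, β i) → M, ∀ m w, hammingDist (enc m) w ≤ δ → dec w = m := by
  classical
  refine ⟨fun w => if h : ∃ m, hammingDist (enc m) w ≤ δ then h.choose
    else Classical.arbitrary M, fun m w hm => ?_⟩
  have hex : ∃ m, hammingDist (enc m) w ≤ δ := ⟨m, hm⟩
  exact (dif_pos hex).trans <| eq_of_hammingDist_le_of_hammingDist_le henc hex.choose_spec hm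

end UniqueDecoding

theorem hammingDist_self_add_right {ι : Type*} {β : ι → Type*} [Fintype ι]
    [∀ i, AddGroup (β i)] [∀ i, DecidableEq (β i)] (c e : ∀ i, β i) :
    hammingDist c (c + e) = hammingNorm e := by
  rw [hammingDist_eq_hammingNorm, neg_add_cancel_left]

theorem Matrix.two_mul_add_one_le_hammingDist_vecMul {R m n : Type*} [Ring R] [DecidableEq R]
    [Fintype m] [Fintype n] {G : Matrix m n R} {δ : ℕ}
    (hG : ∀ y : m → R, y ≠ 0 → 2 * δ + 1 ≤ hammingNorm (y ᵥ* G))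
    (y y' : m → R) (hne : y ≠ y') : 2 * δ + 1 ≤ hammingDist (y ᵥ* G) (y' ᵥ* G) := by
  rw [hammingDist_eq_hammingNorm, neg_add_eq_sub, ← sub_vecMul]
  exact hG _ (sub_ne_zero.mpr hne.symm)

theorem stmt16_general {F : Type*} [Field F] [DecidableEq F] {n K κ n' δ : ℕ}
    (X : Fin K → Finset (Fin n)) (f : Fin K → Fin n)
    (L : Matrix (Fin n) (Fin κ) F)
    (hL : ∀ i : Fin K, ∃ D : (Fin κ → F) → ({j : Fin n // j ∈ X i} → F) → F,
      ∀ x : Fin n → F, D (Matrix.vecMul x L) (fun j => x j.1) = x (f i))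
    (G : Matrix (Fin κ) (Fin n') F)
    (hG : ∀ y : Fin κ → F, y ≠ 0 → 2 * δ + 1 ≤ hammingNorm (Matrix.vecMul y G)) :
    ∀ i : Fin K, ∃ D : (Fin n' → F) → ({j : Fin n // j ∈ X i} → F) → F,
      ∀ (x : Fin n → F) (e : Fin n' → F), hammingNorm e ≤ δ →
        D (Matrix.vecMul (Matrix.vecMul x L) G + e) (fun j => x j.1) = x (f i) := by
  intro i
  obtain ⟨D, hD⟩ := hL i
  obtain ⟨dec, hdec⟩ := exists_decoder_of_two_mul_add_one_le_hammingDist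
    (enc := fun y => y ᵥ* G) (Matrix.two_mul_add_one_le_hammingDist_vecMul hG)
  refine ⟨fun w => D (dec w), fun x e he => ?_⟩
  show D (dec _) _ = _
  rw [hdec _ _ ((hammingDist_self_add_right _ e).trans_le he), hD]

/-- Concatenating a valid scalar linear index code `L` (from which every receiver can
decode its demand using its side information) with a generator matrix `G` of a linear
code of minimum distance `2δ+1` yields a `δ`-error-correcting index code: every receiver
can decode its demand from `(XL)G + e` (with `wt(e) ≤ δ`) and its side information. -/
theorem stmt16 {F : Type*} [Field F] [DecidableEq F] {n K κ n' δ : ℕ}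
    (X : Fin K → Finset (Fin n)) (f : Fin K → Fin n) (hf : ∀ i, f i ∉ X i)
    (L : Matrix (Fin n) (Fin κ) F)
    (hL : ∀ i : Fin K, ∃ D : (Fin κ → F) → ({j : Fin n // j ∈ X i} → F) → F,
      ∀ x : Fin n → F, D (Matrix.vecMul x L) (fun j => x j.1) = x (f i))
    (G : Matrix (Fin κ) (Fin n') F)
    (hG : ∀ y : Fin κ → F, y ≠ 0 → 2 * δ + 1 ≤ hammingNorm (Matrix.vecMul y G)) :
    ∀ i : Fin K, ∃ D : (Fin n' → F) → ({j : Fin n // j ∈ X i} → F) → F,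
      ∀ (x : Fin n → F) (e : Fin n' → F), hammingNorm e ≤ δ →
        D (Matrix.vecMul (Matrix.vecMul x L) G + e) (fun j => x j.1) = x (f i) :=
  stmt16_general X f L hL G hG
end

section
/- If L ∈ F_q^{n×N} satisfies wt(∑_{i∈S} z_i L_i) ≥ 1 for all S ∈ J and all nonzero scalars z_i, and G ∈ F_q^{N×N'} generates a code of minimum distance 2δ+1, then the matrix LG satisfies wt(∑_{i∈S} z_i (LG)_i) ≥ 2δ+1 for all S ∈ J and all nonzero scalars z_i. -/
/-- If `L` is a valid index code matrix (all relevant linear combinations of its rows are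
nonzero) and `G` generates a code of minimum distance `2δ+1`, then the matrix `LG`
satisfies `wt(∑_{i∈S} z_i (LG)_i) ≥ 2δ+1` for all `S ∈ J` and nonzero scalars `z_i`. -/
theorem stmt17 {F : Type*} [Field F] [DecidableEq F] {n N N' δ : ℕ}
    (J : Set (Finset (Fin n))) (hJ : ∀ S ∈ J, S.Nonempty)
    (L : Matrix (Fin n) (Fin N) F)
    (hL : ∀ S ∈ J, ∀ z : Fin n → F, (∀ i ∈ S, z i ≠ 0) →
      1 ≤ hammingNorm (∑ i ∈ S, z i • L i))
    (G : Matrix (Fin N) (Fin N') F)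
    (hG : ∀ y : Fin N → F, y ≠ 0 → 2 * δ + 1 ≤ hammingNorm (Matrix.vecMul y G)) :
    ∀ S ∈ J, ∀ z : Fin n → F, (∀ i ∈ S, z i ≠ 0) →
      2 * δ + 1 ≤ hammingNorm (∑ i ∈ S, z i • (L * G) i) := by
  intro S hS z hz
  have hy : (∑ i ∈ S, z i • L i) ≠ 0 := by
    intro h
    have := hL S hS z hz
    rw [h] at this
    simp at this
  have key : (∑ i ∈ S, z i • (L * G) i)
      = Matrix.vecMul (∑ i ∈ S, z i • L i) G := by
    funext j
    simp only [Finset.sum_apply, Pi.smul_apply, Matrix.vecMul, Matrix.mul_apply,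
      dotProduct, Finset.sum_apply, smul_eq_mul, Finset.mul_sum, Finset.sum_mul]
    rw [Finset.sum_comm]
    ring_nf
  rw [key]
  exact hG _ hy
end

section
/- In a coded caching system with N files, K users, cache parameter r ∈ {0,...,K}, and symmetric batch prefetching, for the demand vector where all users request the same file (Ne(d) = 1), the min-rank of the induced index coding problem equals binomial(K-1, r), which also equals binomial(K, r+1) - binomial(K-1, r+1). -/
/-!
Receiver `(k, A)` wants the subfile `(i0, A)` and knows every subfile `(i, B)` with `k ∈ B`.

Lower bound: for a fixed user `k0`, the `C(K-1, r)` receivers `(k0, A)` demand pairwise distinct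
subfiles, none of which is known to any of them, so restricting their encoding vectors to these
coordinates gives unit vectors: the encoding vectors are linearly independent.

Upper bound: let `σ S = ∑_{A ⊆ S, |A| = r} e_(i0, A)` be the coded multicast transmission of an
`(r+1)`-set `S`. The `C(K-1, r)` transmissions `σ S` with `k0 ∈ S` already serve everybody.
Receiver `(k, A)` uses `σ (A ∪ {k})` when `k0 ∈ A ∪ {k}`, and otherwise
`σ (A ∪ {k0}) - ∑_{j ∈ A} σ (A - j + k + k0)`: there an `r`-set `B ∌ k` with `k0 ∈ B` occurs in
the first term exactly when it occurs in the sum, and then once on each side (for the unique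
`j ∈ A \ B`), so it cancels.
-/

open Finset Module Submodule

section IndexCoding

variable {F ι M : Type*} [Field F] [DecidableEq M] [Finite M]

theorem card_le_finrank_span_add_single {κ : Type*} [Fintype κ] (e : κ → ι) (d : ι → M)
    (hd : Function.Injective (d ∘ e)) (V : ι → M → F) (hV : ∀ a b, V (e a) (d (e b)) = 0) :
    Fintype.card κ ≤ finrank F (span F (Set.range fun i => V i + Pi.single (d i) 1)) := by
  classical
  let π : (M → F) →ₗ[F] (κ → F) := LinearMap.funLeft F F (d ∘ e)
  have hπ : π ∘ (fun a => V (e a) + Pi.single (d (e a)) 1) = fun a => Pi.single a 1 := by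
    funext a b
    simp only [π, Function.comp_apply, LinearMap.funLeft_apply, Pi.add_apply, hV, zero_add,
      Pi.single_apply]
    exact if_congr hd.eq_iff rfl rfl
  have hli : LinearIndependent F fun a => V (e a) + Pi.single (d (e a)) (1 : F) :=
    .of_comp π (hπ ▸ Pi.linearIndependent_single_one κ F)
  calc Fintype.card κ
      ≤ Set.finrank F (Set.range fun a => V (e a) + Pi.single (d (e a)) 1) :=
        linearIndependent_iff_card_le_finrank_span.mp hli
    _ ≤ _ := Set.finrank_mono (by rintro _ ⟨a, rfl⟩; exact ⟨e a, rfl⟩)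

theorem exists_finrank_span_add_single_le (d : ι → M) (P : ι → M → Prop)
    (W : Submodule F (M → F))
    (hW : ∀ i, ∃ v ∈ W, ∀ m, ¬P i m → v m = (Pi.single (d i) 1 : M → F) m) :
    ∃ V : ι → M → F, (∀ i m, V i m ≠ 0 → P i m) ∧
      finrank F (span F (Set.range fun i => V i + Pi.single (d i) 1)) ≤ finrank F W := by
  choose v hvW hv using hW
  refine ⟨fun i => v i - Pi.single (d i) 1, fun i m h => ?_, ?_⟩
  · by_contra hP
    exact h (sub_eq_zero.2 (hv i m hP))
  · refine Submodule.finrank_mono (span_le.2 (Set.range_subset_iff.2 fun i => ?_))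
    simpa using hvW i

end IndexCoding

section Combinatorics

variable {α : Type*} [DecidableEq α]

theorem card_subtype_card_eq_notMem [Fintype α] (r : ℕ) (a : α) :
    Fintype.card {A : Finset α // A.card = r ∧ a ∉ A} = (Fintype.card α - 1).choose r := by
  rw [Fintype.card_subtype, ← card_univ, ← card_erase_of_mem (mem_univ a),
    ← card_powersetCard]
  congr 1
  ext A
  simp [mem_powersetCard, subset_erase, and_comm]

theorem card_filter_subset_insert_erase {A B : Finset α} {a : α} (hBA : B.card = A.card) :
    #{j ∈ A | B ⊆ insert a (A.erase j)} = if a ∈ B ∧ B ⊆ insert a A then 1 else 0 := by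
  simp_rw [subset_insert_iff, subset_erase]
  by_cases ha : a ∈ B
  · split_ifs with h
    · have hfilter : {j ∈ A | B.erase a ⊆ A ∧ j ∉ B.erase a} = A \ B.erase a := by
        ext; simp [h.2]
      rw [hfilter, card_sdiff_of_subset h.2, card_erase_of_mem ha]
      have := card_pos.2 ⟨a, ha⟩
      omega
    · simp_all
  · rw [if_neg (fun h => ha h.1), card_eq_zero, filter_eq_empty_iff, erase_eq_of_notMem ha]
    intro j hj hB
    exact hB.2 (eq_of_subset_of_card_le hB.1 hBA.ge ▸ hj)

end Combinatorics

section BatchPrefetching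

variable {F α β : Type*} [Field F] [DecidableEq α] [DecidableEq β]

/-- The transmission `σ S` of the header, as coefficients on the subfiles `(i, B)`. -/
def multicastVector (i0 : β) (r : ℕ) (S : Finset α) : β × Finset α → F :=
  fun m => if m.1 = i0 ∧ m.2.card = r ∧ m.2 ⊆ S then 1 else 0

def multicastSpan (i0 : β) (r : ℕ) (k0 : α) : Submodule F (β × Finset α → F) :=
  span F (Set.range fun B : {B : Finset α // B.card = r ∧ k0 ∉ B} =>
    multicastVector i0 r (insert k0 B.1))

variable (i0 : β) {r : ℕ}

section

variable (k0 : α) {k : α} {A : Finset α}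

theorem multicastVector_insert_apply (hA : A.card = r) (hk : k ∉ A) {m : β × Finset α}
    (hm : ¬(m.2.card = r ∧ k ∈ m.2)) :
    multicastVector i0 r (insert k A) m = (Pi.single (i0, A) 1 : β × Finset α → F) m := by
  obtain ⟨i, B⟩ := m
  simp only [multicastVector, Pi.single_apply, Prod.mk.injEq]
  refine if_congr (and_congr_right fun _ => ⟨fun ⟨hB, hBA⟩ => ?_, ?_⟩) rfl rfl
  · rw [subset_insert_iff_of_notMem fun hkB => hm ⟨hB, hkB⟩] at hBA
    exact eq_of_subset_of_card_le hBA (hA.trans hB.symm).le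
  · rintro rfl
    exact ⟨hA, subset_insert _ _⟩

theorem multicastVector_sub_sum_apply (hk0 : k0 ∉ A) (hA : A.card = r) {m : β × Finset α}
    (hm : ¬(m.2.card = r ∧ k ∈ m.2)) :
    (multicastVector i0 r (insert k0 A) -
        ∑ j ∈ A, multicastVector i0 r (insert k0 (insert k (A.erase j))) :
          β × Finset α → F) m =
      (Pi.single (i0, A) 1 : β × Finset α → F) m := by
  obtain ⟨i, B⟩ := m
  simp only [multicastVector, Pi.sub_apply, Finset.sum_apply, Pi.single_apply, Prod.mk.injEq]
  by_cases hiB : i = i0 ∧ B.card = r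
  · have hkB : k ∉ B := fun hkB => hm ⟨hiB.2, hkB⟩
    simp only [hiB, true_and, insert_comm k0 k, subset_insert_iff_of_notMem hkB]
    rw [sum_boole, card_filter_subset_insert_erase (hiB.2.trans hA.symm)]
    by_cases hk0B : k0 ∈ B
    · have hBA : B ≠ A := fun h => hk0 (h ▸ hk0B)
      simp [hk0B, hBA]
    · simp [hk0B, subset_insert_iff_of_notMem hk0B,
        subset_iff_eq_of_card_le (hA.trans hiB.2.symm).le]
  · have hBA : ¬(i = i0 ∧ B = A) := fun h => hiB ⟨h.1, h.2 ▸ hA⟩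
    have hoff : ∀ S, ¬(i = i0 ∧ B.card = r ∧ B ⊆ S) := fun S h => hiB ⟨h.1, h.2.1⟩
    simp only [hBA, hoff, if_false, sum_const_zero, sub_zero]

theorem multicastVector_mem_multicastSpan {B : Finset α} (hB : B.card = r) (hk0 : k0 ∉ B) :
    multicastVector i0 r (insert k0 B) ∈ multicastSpan (F := F) i0 r k0 :=
  subset_span ⟨⟨B, hB, hk0⟩, rfl⟩

theorem finrank_multicastSpan_le [Fintype α] :
    finrank F (multicastSpan (F := F) i0 r k0) ≤ (Fintype.card α - 1).choose r :=
  (finrank_range_le_card _).trans (card_subtype_card_eq_notMem r k0).le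

theorem exists_mem_multicastSpan_eqOn_single (hA : A.card = r) (hk : k ∉ A) :
    ∃ v ∈ multicastSpan (F := F) i0 r k0,
      ∀ m, ¬(m.2.card = r ∧ k ∈ m.2) →
        v m = (Pi.single (i0, A) 1 : β × Finset α → F) m := by
  by_cases hk0 : k0 ∈ insert k A
  · refine ⟨multicastVector i0 r (insert k A), ?_,
      fun m hm => multicastVector_insert_apply i0 hA hk hm⟩
    rw [← insert_erase hk0]
    refine multicastVector_mem_multicastSpan i0 k0 ?_ (notMem_erase k0 _)
    rw [card_erase_of_mem hk0, card_insert_of_notMem hk, hA, Nat.add_sub_cancel]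
  · rw [mem_insert, not_or] at hk0
    refine ⟨_, sub_mem (multicastVector_mem_multicastSpan i0 k0 hA hk0.2)
      (sum_mem fun j hj => ?_),
      fun m hm => multicastVector_sub_sum_apply i0 k0 hk0.2 hA hm⟩
    refine multicastVector_mem_multicastSpan i0 k0 ?_ ?_
    · rw [card_insert_of_notMem fun h => hk (mem_of_mem_erase h), card_erase_of_mem hj, hA]
      have := card_pos.2 ⟨j, hj⟩
      omega
    · rw [mem_insert, not_or]
      exact ⟨hk0.1, fun h => hk0.2 (mem_of_mem_erase h)⟩

end

variable [Fintype α] [Finite β]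

theorem choose_le_finrank_span_add_single (k0 : α)
    (V : {p : α × Finset α // p.2.card = r ∧ p.1 ∉ p.2} → β × Finset α → F)
    (hV : ∀ rc m, V rc m ≠ 0 → m.2.card = r ∧ rc.1.1 ∈ m.2) :
    (Fintype.card α - 1).choose r ≤
      finrank F (span F (Set.range fun rc => V rc + Pi.single (i0, rc.1.2) 1)) := by
  let e (A : {A : Finset α // A.card = r ∧ k0 ∉ A}) :
      {p : α × Finset α // p.2.card = r ∧ p.1 ∉ p.2} := ⟨(k0, A.1), A.2⟩
  rw [← card_subtype_card_eq_notMem r k0]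
  refine card_le_finrank_span_add_single e (fun rc => (i0, rc.1.2))
    (fun A A' h => Subtype.ext (Prod.ext_iff.1 h).2) V fun A A' => ?_
  by_contra h
  exact A'.2.2 (hV _ _ h).2

theorem exists_finrank_span_add_single_le_choose (k0 : α) :
    ∃ V : {p : α × Finset α // p.2.card = r ∧ p.1 ∉ p.2} → β × Finset α → F,
      (∀ rc m, V rc m ≠ 0 → m.2.card = r ∧ rc.1.1 ∈ m.2) ∧
      finrank F (span F (Set.range fun rc => V rc + Pi.single (i0, rc.1.2) 1)) ≤
        (Fintype.card α - 1).choose r := by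
  obtain ⟨V, hV, hle⟩ := exists_finrank_span_add_single_le
    (fun rc : {p : α × Finset α // p.2.card = r ∧ p.1 ∉ p.2} => (i0, rc.1.2))
    (fun rc m => m.2.card = r ∧ rc.1.1 ∈ m.2) (multicastSpan (F := F) i0 r k0)
    fun rc => exists_mem_multicastSpan_eqOn_single i0 k0 rc.2.1 rc.2.2
  exact ⟨V, hV, hle.trans (finrank_multicastSpan_le i0 k0)⟩

end BatchPrefetching

theorem stmt18_general {F : Type*} [Field F] (K N r : ℕ) (hK : 0 < K) (i0 : Fin N) :
    sInf {c : ℕ |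
        ∃ V : {p : Fin K × Finset (Fin K) // p.2.card = r ∧ p.1 ∉ p.2} →
            (Fin N × Finset (Fin K)) → F,
          (∀ rc msg, V rc msg ≠ 0 → (msg.2.card = r ∧ rc.1.1 ∈ msg.2)) ∧
          c = Module.finrank F (Submodule.span F
            (Set.range fun rc => V rc + Pi.single (i0, rc.1.2) (1 : F)))}
      = (K - 1).choose r ∧
    (K - 1).choose r = K.choose (r + 1) - (K - 1).choose (r + 1) := by
  let k0 : Fin K := ⟨0, hK⟩
  have hlower := choose_le_finrank_span_add_single (F := F) (r := r) i0 k0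
  simp only [Fintype.card_fin] at hlower
  obtain ⟨V, hV, hupper⟩ := exists_finrank_span_add_single_le_choose (F := F) (r := r) i0 k0
  rw [Fintype.card_fin] at hupper
  refine ⟨IsLeast.csInf_eq ⟨⟨V, hV, (hupper.antisymm (hlower V hV)).symm⟩, ?_⟩, ?_⟩
  · rintro _ ⟨V', hV', rfl⟩
    exact hlower V' hV'
  · obtain ⟨n, rfl⟩ := Nat.exists_eq_add_of_lt hK
    simp [Nat.choose_succ_succ']

/-- For symmetric batch prefetching with all users demanding the same file `i0`
(`Ne(d) = 1`), the min-rank of the induced index coding problem equals `C(K-1, r)`,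
which also equals `C(K, r+1) - C(K-1, r+1)`. -/
theorem stmt18 {F : Type*} [Field F] (K N r : ℕ) (hK : 0 < K) (hN : 0 < N)
    (hr : r ≤ K) (i0 : Fin N) :
    sInf {c : ℕ |
        ∃ V : {p : Fin K × Finset (Fin K) // p.2.card = r ∧ p.1 ∉ p.2} →
            (Fin N × Finset (Fin K)) → F,
          (∀ rc msg, V rc msg ≠ 0 → (msg.2.card = r ∧ rc.1.1 ∈ msg.2)) ∧
          c = Module.finrank F (Submodule.span F
            (Set.range fun rc => V rc + Pi.single (i0, rc.1.2) (1 : F)))}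
      = (K - 1).choose r ∧
    (K - 1).choose r = K.choose (r + 1) - (K - 1).choose (r + 1) :=
  stmt18_general K N r hK i0
end
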